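/- Let Z = {z ∈ {0,1}^d : z_d ≤ z_i for all i ∈ [d−1]} with d ≥ 2, and let Δ₁ = {(w, z) ∈ {0,1} × Z : w ≤ Σ_{i∈[d]} z_i}. Then conv(Δ₁) = {(w, z) ∈ [0,1]^{1+d} : w ≤ Σ_{i∈[d−1]} z_i − (d−2)·z_d and z_d ≤ z_i for all i ∈ [d−1]}. -/

import Mathlib

/-!
Write a point of the right-hand side as `z = t • 1 + (1 - t) • y` with `t = z ℓ` and
`y i = (z i - t) / (1 - t)`. The all-ones vector carries every `w ∈ [0, 1]`, and `y` vanishes at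
`ℓ`, so it satisfies the hierarchy constraints for free; the defining inequality
`w ≤ t + Σ i, (z i - t)` is exactly what allows `w` to be split between the two pieces. It remains
to see that `conv Δ₁ = {w ≤ Σ z} ∩ [0, 1]^{1+n}` for `Z` the full cube (on the coordinates other
than `ℓ`). This goes by induction on the set of fractional coordinates: a fractional `z a = α` is
removed by writing `z = α • z⁺ + (1 - α) • z⁻` with `z⁺ a = 1`, `z⁻ a = 0` and `z⁻` as large as
possible, `z⁻ i = min (z i) (1 - α) / (1 - α)`, which keeps `Σ z⁻` large enough to carry the
part of `w` not absorbed by `z⁺`.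
-/

open Finset

section Segment
variable {E : Type*} [AddCommGroup E] [Module ℝ E] {S : Set (ℝ × E)}

theorem mk_mem_convexHull_of_zero_of_one {x : E} (h₀ : ((0 : ℝ), x) ∈ convexHull ℝ S)
    (h₁ : ((1 : ℝ), x) ∈ convexHull ℝ S) {w : ℝ} (hw : w ∈ Set.Icc (0 : ℝ) 1) :
    (w, x) ∈ convexHull ℝ S := by
  have hx : (w, x) = (1 - w) • ((0 : ℝ), x) + w • ((1 : ℝ), x) := by
    ext
    · simp
    · simp [← add_smul]
  rw [hx]
  exact convex_convexHull ℝ S h₀ h₁ (by linarith [hw.2]) hw.1 (by ring)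

theorem exists_eq_mul_add_mul {a w M : ℝ} (ha : a ∈ Set.Icc (0 : ℝ) 1)
    (hw : w ∈ Set.Icc (0 : ℝ) 1) (hM : 0 ≤ M) (hwM : w ≤ a + (1 - a) * M) :
    ∃ w₁ ∈ Set.Icc (0 : ℝ) 1, ∃ w₀ ∈ Set.Icc (0 : ℝ) 1, w₀ ≤ M ∧ w = a * w₁ + (1 - a) * w₀ := by
  rcases le_or_gt w a with hwa | haw
  · refine ⟨w / a, ⟨div_nonneg hw.1 ha.1, div_le_one_of_le₀ hwa ha.1⟩, 0, ⟨le_rfl, zero_le_one⟩,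
      hM, ?_⟩
    rw [mul_div_cancel_of_imp' fun h => by linarith [hw.1]]
    ring
  · have ha₁ : 0 < 1 - a := by linarith [hw.2]
    refine ⟨1, ⟨zero_le_one, le_rfl⟩, (w - a) / (1 - a),
      ⟨div_nonneg (by linarith) ha₁.le, div_le_one_of_le₀ (by linarith [hw.2]) ha₁.le⟩,
      (div_le_iff₀ ha₁).2 (by linarith), ?_⟩
    rw [mul_div_cancel₀ _ ha₁.ne']
    ring

theorem mk_smul_add_smul_mem_convexHull {a w M : ℝ} {x₁ x₀ : E} (ha : a ∈ Set.Icc (0 : ℝ) 1)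
    (hw : w ∈ Set.Icc (0 : ℝ) 1) (hM : 0 ≤ M) (hwM : w ≤ a + (1 - a) * M)
    (h₁ : ∀ w₁ ∈ Set.Icc (0 : ℝ) 1, (w₁, x₁) ∈ convexHull ℝ S)
    (h₀ : ∀ w₀ ∈ Set.Icc (0 : ℝ) 1, w₀ ≤ M → (w₀, x₀) ∈ convexHull ℝ S) :
    (w, a • x₁ + (1 - a) • x₀) ∈ convexHull ℝ S := by
  obtain ⟨w₁, hw₁, w₀, hw₀, hw₀M, rfl⟩ := exists_eq_mul_add_mul ha hw hM hwM
  have hx : (a * w₁ + (1 - a) * w₀, a • x₁ + (1 - a) • x₀)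
      = a • (w₁, x₁) + (1 - a) • (w₀, x₀) := by
    simp
  rw [hx]
  exact convex_convexHull ℝ S (h₁ w₁ hw₁) (h₀ w₀ hw₀ hw₀M) ha.1 (by linarith [ha.2]) (by ring)

end Segment

theorem Finset.min_sum_le_sum_min {ι : Type*} (s : Finset ι) {f : ι → ℝ}
    (hf : ∀ i ∈ s, 0 ≤ f i) {c : ℝ} (hc : 0 ≤ c) :
    min (∑ i ∈ s, f i) c ≤ ∑ i ∈ s, min (f i) c := by
  by_cases h : ∃ i ∈ s, c ≤ f i
  · obtain ⟨i, hi, hci⟩ := h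
    calc min (∑ i ∈ s, f i) c ≤ min (f i) c := by rw [min_eq_right hci]; exact min_le_right _ _
      _ ≤ ∑ i ∈ s, min (f i) c :=
        single_le_sum (f := fun i => min (f i) c) (fun j hj => le_min (hf j hj) hc) hi
  · push Not at h
    rw [sum_congr rfl fun i hi => min_eq_left (h i hi).le]
    exact min_le_left _ _

section Split
variable {ι : Type*} [DecidableEq ι] {z : ι → ℝ} {a : ι}

noncomputable def splitHigh (z : ι → ℝ) (a : ι) : ι → ℝ :=
  Function.update (fun i => (z i - min (z i) (1 - z a)) / z a) a 1

noncomputable def splitLow (z : ι → ℝ) (a : ι) : ι → ℝ :=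
  Function.update (fun i => min (z i) (1 - z a) / (1 - z a)) a 0

@[simp] theorem splitHigh_self : splitHigh z a a = 1 := Function.update_self ..

@[simp] theorem splitLow_self : splitLow z a a = 0 := Function.update_self ..

theorem smul_splitHigh_add_smul_splitLow (ha : z a ∈ Set.Ioo (0 : ℝ) 1) :
    z a • splitHigh z a + (1 - z a) • splitLow z a = z := by
  have ha' : 1 - z a ≠ 0 := by linarith [ha.2]
  funext i
  rcases eq_or_ne i a with rfl | hi
  · simp
  · simp only [splitHigh, splitLow, Pi.add_apply, Pi.smul_apply, smul_eq_mul,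
      Function.update_of_ne hi]
    rw [mul_div_cancel₀ _ ha.1.ne', mul_div_cancel₀ _ ha']
    ring

theorem splitHigh_mem_Icc (hz : ∀ i, z i ∈ Set.Icc (0 : ℝ) 1) (ha : z a ∈ Set.Ioo (0 : ℝ) 1)
    (i : ι) : splitHigh z a i ∈ Set.Icc (0 : ℝ) 1 := by
  rcases eq_or_ne i a with rfl | hi
  · simp
  · rw [splitHigh, Function.update_of_ne hi]
    refine ⟨div_nonneg (sub_nonneg.2 (min_le_left _ _)) ha.1.le, div_le_one_of_le₀ ?_ ha.1.le⟩
    rcases min_cases (z i) (1 - z a) with ⟨h, -⟩ | ⟨h, -⟩ <;> rw [h] <;>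
      linarith [(hz i).2, ha.1]

theorem splitLow_mem_Icc (hz : ∀ i, z i ∈ Set.Icc (0 : ℝ) 1) (ha : z a ∈ Set.Ioo (0 : ℝ) 1)
    (i : ι) : splitLow z a i ∈ Set.Icc (0 : ℝ) 1 := by
  rcases eq_or_ne i a with rfl | hi
  · simp
  · rw [splitLow, Function.update_of_ne hi]
    exact ⟨div_nonneg (le_min (hz i).1 (by linarith [ha.2])) (by linarith [ha.2]),
      div_le_one_of_le₀ (min_le_right _ _) (by linarith [ha.2])⟩

theorem splitHigh_eq_of_binary (ha : z a ∈ Set.Ioo (0 : ℝ) 1) {i : ι} (hi : i ≠ a)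
    (hzi : z i = 0 ∨ z i = 1) :
    splitHigh z a i = z i := by
  rw [splitHigh, Function.update_of_ne hi]
  rcases hzi with h | h <;> rw [h]
  · simp [ha.2.le]
  · rw [min_eq_right (by linarith [ha.1])]
    field_simp [ha.1.ne']
    ring

theorem splitLow_eq_of_binary (ha : z a ∈ Set.Ioo (0 : ℝ) 1) {i : ι} (hi : i ≠ a)
    (hzi : z i = 0 ∨ z i = 1) :
    splitLow z a i = z i := by
  rw [splitLow, Function.update_of_ne hi]
  rcases hzi with h | h <;> rw [h]
  · simp [ha.2.le]
  · rw [min_eq_right (by linarith [ha.1]), div_self (by linarith [ha.2])]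

theorem min_sum_le_add_mul_sum_splitLow [Fintype ι] (hz : ∀ i, z i ∈ Set.Icc (0 : ℝ) 1)
    (ha : z a ∈ Set.Ioo (0 : ℝ) 1) :
    min (∑ i, z i) 1 ≤ z a + (1 - z a) * ∑ i, splitLow z a i := by
  have ha' : 1 - z a ≠ 0 := by linarith [ha.2]
  have hlow : (1 - z a) * ∑ i, splitLow z a i = ∑ i ∈ univ.erase a, min (z i) (1 - z a) := by
    rw [mul_sum, ← add_sum_erase _ _ (mem_univ a), splitLow_self, mul_zero, zero_add]
    refine sum_congr rfl fun i hi => ?_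
    rw [splitLow, Function.update_of_ne (ne_of_mem_erase hi), mul_div_cancel₀ _ ha']
  calc min (∑ i, z i) 1
      = z a + min (∑ i ∈ univ.erase a, z i) (1 - z a) := by
        rw [← add_sum_erase _ _ (mem_univ a), ← min_add_add_left, add_sub_cancel]
    _ ≤ z a + (1 - z a) * ∑ i, splitLow z a i := by
        rw [hlow]
        gcongr
        exact min_sum_le_sum_min _ (fun i _ => (hz i).1) (by linarith [ha.2])

end Split

section Cube
variable {ι : Type*} [Fintype ι]

/-- The paper's `Δ₁` when `Z` is the set of binary vectors supported in `T`. -/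
def cubeDelta1 (T : Set ι) : Set (ℝ × (ι → ℝ)) :=
  {q | (q.1 = 0 ∨ q.1 = 1) ∧ (∀ i, q.2 i = 0 ∨ q.2 i = 1) ∧ (∀ i ∉ T, q.2 i = 0) ∧
    q.1 ≤ ∑ i, q.2 i}

def cubeDelta1Relaxation (T : Set ι) (s : Finset ι) : Set (ℝ × (ι → ℝ)) :=
  {q | q.1 ∈ Set.Icc (0 : ℝ) 1 ∧ (∀ i, q.2 i ∈ Set.Icc (0 : ℝ) 1) ∧ (∀ i ∉ T, q.2 i = 0) ∧
    (∀ i ∉ s, q.2 i = 0 ∨ q.2 i = 1) ∧ q.1 ≤ ∑ i, q.2 i}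

theorem cubeDelta1Relaxation_empty_subset (T : Set ι) :
    cubeDelta1Relaxation T ∅ ⊆ convexHull ℝ (cubeDelta1 T) := by
  rintro ⟨w, z⟩ ⟨hw, hz, hT, hbin, hwz⟩
  have hbin' : ∀ i, z i = 0 ∨ z i = 1 := fun i => hbin i (notMem_empty i)
  by_cases h : ∃ i, z i = 1
  · obtain ⟨i, hi⟩ := h
    have hsum : 1 ≤ ∑ j, z j := hi ▸ single_le_sum (fun j _ => (hz j).1) (mem_univ i)
    exact mk_mem_convexHull_of_zero_of_one
      (subset_convexHull ℝ (cubeDelta1 T) ⟨Or.inl rfl, hbin', hT, zero_le_one.trans hsum⟩)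
      (subset_convexHull ℝ (cubeDelta1 T) ⟨Or.inr rfl, hbin', hT, hsum⟩) hw
  · push Not at h
    obtain rfl : z = 0 := funext fun i => (hbin' i).resolve_right (h i)
    obtain rfl : w = 0 := le_antisymm (by simpa using hwz) hw.1
    exact subset_convexHull ℝ (cubeDelta1 T) ⟨Or.inl rfl, hbin', hT, by simp⟩

theorem cubeDelta1Relaxation_insert_subset [DecidableEq ι] {T : Set ι} {s : Finset ι} (a : ι)
    (ih : cubeDelta1Relaxation T s ⊆ convexHull ℝ (cubeDelta1 T)) :
    cubeDelta1Relaxation T (insert a s) ⊆ convexHull ℝ (cubeDelta1 T) := by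
  rintro ⟨w, z⟩ ⟨hw, hz, hT, hbin, hwz⟩
  have hbin' : ∀ i ∉ s, i ≠ a → z i = 0 ∨ z i = 1 := fun i hi hia => hbin i (by simp [hi, hia])
  by_cases hza : z a = 0 ∨ z a = 1
  · refine ih ⟨hw, hz, hT, fun i hi => ?_, hwz⟩
    rcases eq_or_ne i a with rfl | hia
    exacts [hza, hbin' i hi hia]
  have ha : z a ∈ Set.Ioo (0 : ℝ) 1 := by
    rw [not_or] at hza
    exact ⟨(hz a).1.lt_of_ne' hza.1, (hz a).2.lt_of_ne hza.2⟩
  have hmem : ∀ v : ι → ℝ, (∀ i, v i ∈ Set.Icc (0 : ℝ) 1) → (v a = 0 ∨ v a = 1) →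
      (∀ i ≠ a, (z i = 0 ∨ z i = 1) → v i = z i) →
      ∀ w' ∈ Set.Icc (0 : ℝ) 1, w' ≤ ∑ i, v i → (w', v) ∈ convexHull ℝ (cubeDelta1 T) := by
    intro v hv hva hvz w' hw' hw'v
    refine ih ⟨hw', hv, fun i hi => ?_, fun i hi => ?_, hw'v⟩
    · have hia : i ≠ a := by rintro rfl; exact ha.1.ne' (hT _ hi)
      exact (hvz i hia (Or.inl (hT i hi))).trans (hT i hi)
    · rcases eq_or_ne i a with rfl | hia
      · exact hva
      · dsimp only
        rw [hvz i hia (hbin' i hi hia)]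
        exact hbin' i hi hia
  rw [← smul_splitHigh_add_smul_splitLow ha]
  refine mk_smul_add_smul_mem_convexHull (Set.Ioo_subset_Icc_self ha) hw
    (sum_nonneg fun i _ => (splitLow_mem_Icc hz ha i).1)
    ((le_min hwz hw.2).trans (min_sum_le_add_mul_sum_splitLow hz ha))
    (fun w₁ hw₁ => hmem _ (splitHigh_mem_Icc hz ha) (by simp)
      (fun _ hia => splitHigh_eq_of_binary ha hia) w₁ hw₁ ?_)
    (hmem _ (splitLow_mem_Icc hz ha) (by simp) fun _ hia => splitLow_eq_of_binary ha hia)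
  calc w₁ ≤ splitHigh z a a := by simpa using hw₁.2
    _ ≤ ∑ i, splitHigh z a i :=
      single_le_sum (fun i _ => (splitHigh_mem_Icc hz ha i).1) (mem_univ a)

theorem cubeDelta1Relaxation_subset_convexHull (T : Set ι) (s : Finset ι) :
    cubeDelta1Relaxation T s ⊆ convexHull ℝ (cubeDelta1 T) := by
  classical
  induction s using Finset.induction_on with
  | empty => exact cubeDelta1Relaxation_empty_subset T
  | insert a s _ ih => exact cubeDelta1Relaxation_insert_subset a ih

end Cube

section Hierarchy
variable {ι : Type*} [Fintype ι]

def hierarchyDelta1 (ℓ : ι) : Set (ℝ × (ι → ℝ)) :=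
  {q | (q.1 = 0 ∨ q.1 = 1) ∧ ((∀ i, q.2 i = 0 ∨ q.2 i = 1) ∧ ∀ i : ι, i ≠ ℓ → q.2 ℓ ≤ q.2 i) ∧
    q.1 ≤ ∑ i, q.2 i}

/-- `q.2 ℓ + ∑ i, (q.2 i - q.2 ℓ)` is the paper's `∑_{i ∈ [d-1]} z_i - (d - 2) z_d`. -/
def hierarchyPolytope (ℓ : ι) : Set (ℝ × (ι → ℝ)) :=
  {q | q.1 ∈ Set.Icc (0 : ℝ) 1 ∧ (∀ i, q.2 i ∈ Set.Icc (0 : ℝ) 1) ∧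
    q.1 ≤ q.2 ℓ + ∑ i, (q.2 i - q.2 ℓ) ∧ ∀ i : ι, i ≠ ℓ → q.2 ℓ ≤ q.2 i}

theorem cubeDelta1_compl_singleton_subset (ℓ : ι) :
    cubeDelta1 {ℓ}ᶜ ⊆ hierarchyDelta1 ℓ := by
  rintro q ⟨hw, hz, hℓ, hwz⟩
  have hzℓ : q.2 ℓ = 0 := hℓ ℓ (by simp)
  refine ⟨hw, ⟨hz, fun i _ => ?_⟩, hwz⟩
  rcases hz i with h | h <;> simp [h, hzℓ]

theorem hierarchyDelta1_subset_hierarchyPolytope (ℓ : ι) :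
    hierarchyDelta1 ℓ ⊆ hierarchyPolytope ℓ := by
  rintro q ⟨hw, ⟨hz, hℓ⟩, hwz⟩
  have hmem : ∀ x : ℝ, x = 0 ∨ x = 1 → x ∈ Set.Icc (0 : ℝ) 1 := by
    rintro x (rfl | rfl) <;> simp
  refine ⟨hmem _ hw, fun i => hmem _ (hz i), ?_, hℓ⟩
  rcases hz ℓ with h | h
  · simpa [h] using hwz
  · have hge : ∀ i, 0 ≤ q.2 i - q.2 ℓ := fun i => by
      rcases eq_or_ne i ℓ with rfl | hi
      exacts [(sub_self _).ge, sub_nonneg.2 (hℓ i hi)]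
    have := sum_nonneg fun i (_ : i ∈ univ) => hge i
    linarith [(hmem _ hw).2]

theorem convex_hierarchyPolytope (ℓ : ι) : Convex ℝ (hierarchyPolytope ℓ) := by
  rintro ⟨w, z⟩ ⟨hw, hz, hwz, hℓ⟩ ⟨w', z'⟩ ⟨hw', hz', hwz', hℓ'⟩ a b ha hb hab
  refine ⟨convex_Icc 0 1 hw hw' ha hb hab, fun i => convex_Icc 0 1 (hz i) (hz' i) ha hb hab,
    ?_, fun i hi => ?_⟩
  · have hsum : ∑ i, (a * z i + b * z' i - (a * z ℓ + b * z' ℓ))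
        = a * ∑ i, (z i - z ℓ) + b * ∑ i, (z' i - z' ℓ) := by
      rw [mul_sum, mul_sum, ← sum_add_distrib]
      exact sum_congr rfl fun i _ => by ring
    simp only [Prod.snd_add, Prod.smul_snd, Prod.fst_add, Prod.smul_fst, Pi.add_apply,
      Pi.smul_apply, smul_eq_mul]
    rw [hsum]
    linarith [mul_le_mul_of_nonneg_left hwz ha, mul_le_mul_of_nonneg_left hwz' hb]
  · simp only [Prod.snd_add, Prod.smul_snd, Pi.add_apply, Pi.smul_apply, smul_eq_mul]
    exact add_le_add (mul_le_mul_of_nonneg_left (hℓ i hi) ha)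
      (mul_le_mul_of_nonneg_left (hℓ' i hi) hb)

theorem hierarchyPolytope_subset_convexHull (ℓ : ι) :
    hierarchyPolytope ℓ ⊆ convexHull ℝ (hierarchyDelta1 ℓ) := by
  rintro ⟨w, z⟩ ⟨hw, hz, hwz, hℓ⟩
  have hge : ∀ i, z ℓ ≤ z i := fun i => by
    rcases eq_or_ne i ℓ with rfl | hi
    exacts [le_rfl, hℓ i hi]
  set y : ι → ℝ := fun i => (z i - z ℓ) / (1 - z ℓ)
  have hy : ∀ i, (1 - z ℓ) * y i = z i - z ℓ := fun i =>
    mul_div_cancel_of_imp' fun h => by linarith [(hz i).2, hge i]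
  have hzy : z = z ℓ • (fun _ => 1) + (1 - z ℓ) • y := funext fun i => by
    simp only [Pi.add_apply, Pi.smul_apply, smul_eq_mul, hy]
    ring
  have hones : ∀ w₁ : ℝ, w₁ = 0 ∨ w₁ = 1 → (w₁, fun _ : ι => (1 : ℝ)) ∈ hierarchyDelta1 ℓ :=
    fun w₁ hw₁ => ⟨hw₁, ⟨fun _ => Or.inr rfl, fun _ _ => le_rfl⟩, by
      have : Nonempty ι := ⟨ℓ⟩
      rcases hw₁ with rfl | rfl <;> simp [Nat.one_le_iff_ne_zero]⟩
  rw [hzy]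
  refine mk_smul_add_smul_mem_convexHull (hz ℓ) hw
    (sum_nonneg fun i _ => div_nonneg (sub_nonneg.2 (hge i)) (by linarith [(hz ℓ).2]))
    (by rwa [mul_sum, sum_congr rfl fun i _ => hy i])
    (fun w₁ hw₁ => mk_mem_convexHull_of_zero_of_one (subset_convexHull ℝ _ (hones 0 (Or.inl rfl)))
      (subset_convexHull ℝ _ (hones 1 (Or.inr rfl))) hw₁)
    (fun w₀ hw₀ hw₀y => convexHull_mono (cubeDelta1_compl_singleton_subset ℓ)
      (cubeDelta1Relaxation_subset_convexHull _ univ ⟨hw₀, fun i => ?_, ?_, by simp, hw₀y⟩))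
  · exact ⟨div_nonneg (sub_nonneg.2 (hge i)) (by linarith [(hz ℓ).2]),
      div_le_one_of_le₀ (by linarith [(hz i).2]) (by linarith [(hz ℓ).2])⟩
  · simp [y]

theorem convexHull_hierarchyDelta1 (ℓ : ι) :
    convexHull ℝ (hierarchyDelta1 ℓ) = hierarchyPolytope ℓ :=
  (convexHull_min (hierarchyDelta1_subset_hierarchyPolytope ℓ)
    (convex_hierarchyPolytope ℓ)).antisymm (hierarchyPolytope_subset_convexHull ℓ)

end Hierarchy

/-- Convex hull of `Δ₁` for the strong hierarchy set
`Z = {z ∈ {0,1}^d : z_d ≤ z_i, ∀ i ∈ [d-1]}`. -/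
theorem convexHull_Delta1_strong_hierarchy {d : ℕ} (hd : 2 ≤ d) :
    convexHull ℝ {q : ℝ × (Fin d → ℝ) |
        (q.1 = 0 ∨ q.1 = 1) ∧
        ((∀ i, q.2 i = 0 ∨ q.2 i = 1) ∧
          ∀ i : Fin d, i ≠ ⟨d - 1, by omega⟩ → q.2 ⟨d - 1, by omega⟩ ≤ q.2 i) ∧
        q.1 ≤ ∑ i, q.2 i}
      = {q : ℝ × (Fin d → ℝ) |
        q.1 ∈ Set.Icc (0 : ℝ) 1 ∧ (∀ i, q.2 i ∈ Set.Icc (0 : ℝ) 1) ∧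
        q.1 ≤ (∑ i ∈ Finset.univ.erase ⟨d - 1, by omega⟩, q.2 i)
          - ((d : ℝ) - 2) * q.2 ⟨d - 1, by omega⟩ ∧
        ∀ i : Fin d, i ≠ ⟨d - 1, by omega⟩ → q.2 ⟨d - 1, by omega⟩ ≤ q.2 i} := by
  set ℓ : Fin d := ⟨d - 1, by omega⟩
  have hsum : ∀ z : Fin d → ℝ,
      ∑ i ∈ univ.erase ℓ, z i - ((d : ℝ) - 2) * z ℓ = z ℓ + ∑ i, (z i - z ℓ) := fun z => by
    rw [sum_sub_distrib, sum_const, card_univ, Fintype.card_fin, nsmul_eq_mul,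
      ← add_sum_erase _ _ (mem_univ ℓ)]
    ring
  calc convexHull ℝ _ = hierarchyPolytope ℓ := convexHull_hierarchyDelta1 ℓ
    _ = _ := by
      ext ⟨w, z⟩
      simp only [hierarchyPolytope, Set.mem_ofPred_eq, hsum]
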